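/- Let (η_1, ..., η_M) be a 1-dependent sequence of {0,1}-valued random variables (i.e., (η_k, k ∈ A₁) and (η_k, k ∈ A₂) are independent whenever no element of A₁ is within distance 1 of an element of A₂). If P(η_k = 1) ≥ 3/4 for every k, then P(η_1 = η_2 = ... = η_M = 1) ≥ (1/4)^M. -/
import Mathlib


open MeasureTheory

/-- Liggett–Schonmann–Stacey type bound: if `(η_1, …, η_M)` is a 1-dependent
sequence of `{0,1}`-valued random variables with `P(η_k = 1) ≥ 3/4` for every
`k`, then `P(η_1 = ⋯ = η_M = 1) ≥ (1/4)^M`. -/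
theorem stmt_3 {Ω : Type*} [MeasurableSpace Ω] (μ : Measure Ω)
    [IsProbabilityMeasure μ] (M : ℕ) (η : ℕ → Ω → ℕ)
    (hmeas : ∀ k, Measurable (η k))
    (h01 : ∀ k ω, η k ω = 0 ∨ η k ω = 1)
    (hdep : ∀ (A₁ A₂ : Finset ℕ),
      (∀ i ∈ A₁, ∀ j ∈ A₂, 2 ≤ max i j - min i j) →
      ∀ v₁ v₂ : ℕ → ℕ,
        μ ((⋂ k ∈ A₁, {ω | η k ω = v₁ k}) ∩ (⋂ k ∈ A₂, {ω | η k ω = v₂ k})) =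
        μ (⋂ k ∈ A₁, {ω | η k ω = v₁ k}) * μ (⋂ k ∈ A₂, {ω | η k ω = v₂ k}))
    (hp : ∀ k, 1 ≤ k → k ≤ M → ENNReal.ofReal (3 / 4) ≤ μ {ω | η k ω = 1}) :
    ENNReal.ofReal ((1 / 4 : ℝ) ^ M) ≤ μ (⋂ k ∈ Finset.Icc 1 M, {ω | η k ω = 1}) := by
  classical
  set S : ℕ → Set Ω := fun m => ⋂ k ∈ Finset.Icc 1 m, {ω | η k ω = 1} with hS
  set a : ℕ → ℝ := fun m => (μ (S m)).toReal with ha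
  have hfin : ∀ s : Set Ω, μ s ≠ ⊤ := fun s => measure_ne_top μ s
  have hIcc0 : Finset.Icc 1 0 = ∅ := by simp
  have hS0 : S 0 = Set.univ := by
    rw [hS]
    show (⋂ k ∈ Finset.Icc 1 0, {ω | η k ω = 1}) = Set.univ
    rw [hIcc0]; simp
  have ha0 : a 0 = 1 := by rw [ha]; simp [hS0]
  have hanonneg : ∀ m, 0 ≤ a m := fun m => ENNReal.toReal_nonneg
  -- the probability of {η k = 1} in real terms
  have hone : ∀ k, 1 ≤ k → k ≤ M → (3:ℝ)/4 ≤ (μ {ω | η k ω = 1}).toReal := by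
    intro k hk1 hk2
    exact (ENNReal.ofReal_le_iff_le_toReal (hfin _)).mp (hp k hk1 hk2)
  have hzero : ∀ k, 1 ≤ k → k ≤ M → (μ {ω | η k ω = 0}).toReal ≤ 1/4 := by
    intro k hk1 hk2
    have hm1 : MeasurableSet {ω | η k ω = 1} := hmeas k (measurableSet_singleton 1)
    have hd : Disjoint {ω : Ω | η k ω = 0} {ω | η k ω = 1} := by
      rw [Set.disjoint_left]; intro ω h0 h1
      simp only [Set.mem_setOf_eq] at h0 h1; omega
    have hu : {ω : Ω | η k ω = 0} ∪ {ω | η k ω = 1} = Set.univ := by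
      ext ω; simpa using h01 k ω
    have hsum := measure_union (μ := μ) hd hm1
    rw [hu, measure_univ] at hsum
    have := congrArg ENNReal.toReal hsum
    rw [ENNReal.toReal_add (hfin _) (hfin _)] at this
    have h1 := hone k hk1 hk2
    simp only [ENNReal.toReal_one] at this
    linarith
  -- key recurrence from 1-dependence
  have hkey : ∀ n, n + 2 ≤ M → a (n+1) ≤ a (n+2) + (1/4) * a n := by
    intro n hn
    have hsub : S (n+1) ⊆ S (n+2) ∪ (S n ∩ {ω | η (n+2) ω = 0}) := by
      intro ω hω
      simp only [hS] at hω
      have hω' : ∀ k, 1 ≤ k → k ≤ n+1 → η k ω = 1 := by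
        intro k h1 h2
        exact Set.mem_iInter₂.mp hω k (Finset.mem_Icc.mpr ⟨h1, h2⟩)
      rcases h01 (n+2) ω with h | h
      · refine Or.inr ⟨?_, h⟩
        simp only [hS]
        refine Set.mem_iInter₂.mpr fun k hk => ?_
        have hk' := Finset.mem_Icc.mp hk
        exact hω' k hk'.1 (by omega)
      · refine Or.inl ?_
        simp only [hS]
        refine Set.mem_iInter₂.mpr fun k hk => ?_
        have hk' := Finset.mem_Icc.mp hk
        rcases Nat.lt_or_ge k (n+2) with hlt | hge
        · exact hω' k hk'.1 (by omega)
        · obtain rfl : k = n + 2 := by omega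
          exact h
    have hprod : μ (S n ∩ {ω | η (n+2) ω = 0}) = μ (S n) * μ {ω | η (n+2) ω = 0} := by
      have := hdep (Finset.Icc 1 n) {n+2}
        (by intro i hi j hj
            simp only [Finset.mem_Icc] at hi
            simp only [Finset.mem_singleton] at hj
            subst hj
            rcases hi with ⟨h1, h2⟩
            rw [max_eq_right (by omega), min_eq_left (by omega)]
            omega)
        (fun _ => 1) (fun _ => 0)
      simpa [hS] using this
    have step1 : μ (S (n+1)) ≤ μ (S (n+2)) + μ (S n ∩ {ω | η (n+2) ω = 0}) :=
      le_trans (measure_mono hsub) (measure_union_le _ _)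
    have step2 : a (n+1) ≤ a (n+2) + (μ (S n ∩ {ω | η (n+2) ω = 0})).toReal := by
      have := ENNReal.toReal_mono (by
        exact ENNReal.add_ne_top.mpr ⟨hfin _, hfin _⟩) step1
      rwa [ENNReal.toReal_add (hfin _) (hfin _)] at this
    have step3 : (μ (S n ∩ {ω | η (n+2) ω = 0})).toReal ≤ (1/4) * a n := by
      rw [hprod, ENNReal.toReal_mul]
      have h0 := hzero (n+2) (by omega) hn
      have := hanonneg n
      nlinarith [ENNReal.toReal_nonneg (a := μ {ω | η (n+2) ω = 0})]
    linarith
  -- a 1 ≥ 3/4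
  have ha1 : ∀ _ : 1 ≤ M, (3:ℝ)/4 ≤ a 1 := by
    intro h
    have hS1 : S 1 = {ω | η 1 ω = 1} := by
      simp only [hS]
      ext ω
      simp only [Set.mem_iInter, Finset.mem_Icc, Set.mem_setOf_eq]
      constructor
      · intro hh; exact hh 1 ⟨le_rfl, le_rfl⟩
      · intro hh k hk; obtain rfl : k = 1 := by omega
        exact hh
    rw [ha]; simp only [hS1]
    exact hone 1 le_rfl h
  -- main induction: a m ≥ (1/2) * a (m-1)
  have hhalf : ∀ m, 1 ≤ m → m ≤ M → (1/2) * a (m - 1) ≤ a m := by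
    intro m
    induction m with
    | zero => omega
    | succ n ih =>
      intro _ hle
      rcases Nat.eq_zero_or_pos n with rfl | hn
      · simp only [Nat.sub_self, Nat.zero_add] at *
        rw [ha0]
        have := ha1 hle
        linarith
      · obtain ⟨k, rfl⟩ := Nat.exists_eq_succ_of_ne_zero (Nat.pos_iff_ne_zero.mp hn)
        have IH := ih (by omega) (by omega)
        simp only [Nat.succ_eq_add_one, Nat.add_sub_cancel, Nat.succ_sub_one] at IH ⊢
        have key := hkey k (by omega)
        linarith
  -- a m ≥ (1/2)^m
  have hpow : ∀ m, m ≤ M → (1/2:ℝ)^m ≤ a m := by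
    intro m
    induction m with
    | zero => intro _; rw [ha0]; norm_num
    | succ n ih =>
      intro hle
      have h1 := hhalf (n+1) (by omega) hle
      simp only [Nat.add_sub_cancel] at h1
      have h2 := ih (by omega)
      calc (1/2:ℝ)^(n+1) = (1/2) * (1/2:ℝ)^n := by ring
        _ ≤ (1/2) * a n := by linarith
        _ ≤ a (n+1) := h1
  have hfinal : (1/4:ℝ)^M ≤ a M := by
    refine le_trans ?_ (hpow M le_rfl)
    exact pow_le_pow_left₀ (by norm_num) (by norm_num) M
  exact ENNReal.ofReal_le_of_le_toReal hfinal
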